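/- arXiv:1803.11165 — 3 statements merged into one kernel-verified Lean document; each statement's English description precedes it below -/
import Mathlib

section
/- Let G be a group with a presentation with generating set S, let H ≤ G be a subgroup, and let A = {g_ℓ} be a Schreier transversal for H (a set of coset representatives such that every initial subword of a reduced representative word is again a representative). Then H is generated by the elements g_ℓ s (overline{g_ℓ s})^{-1} for ℓ ranging over cosets and s ∈ S, where overline{g} denotes the representative of the coset gH in A. In the case where G = F(S) is free, the nontrivial such elements freely generate H. -/
set_option linter.unusedSectionVars false

namespace RS8

open FreeGroup

variable {α : Type} [DecidableEq α]

def Bset (ρ : FreeGroup α → FreeGroup α) : Set (FreeGroup α) :=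
  {x : FreeGroup α | (∃ (g : FreeGroup α) (s : α),
      x = ρ g * FreeGroup.of s * (ρ (ρ g * FreeGroup.of s))⁻¹) ∧ x ≠ 1}

variable (ρ : FreeGroup α → FreeGroup α)

def e (p : FreeGroup α) (s : α) : FreeGroup (Bset ρ) :=
  if h : ρ p * FreeGroup.of s * (ρ (ρ p * FreeGroup.of s))⁻¹ = 1 then 1
  else FreeGroup.of ⟨_, ⟨⟨p, s, rfl⟩, h⟩⟩

def step : FreeGroup α × FreeGroup (Bset ρ) → α × Bool → FreeGroup α × FreeGroup (Bset ρ)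
  | (p, k), (s, true) => (p * FreeGroup.of s, k * e ρ p s)
  | (p, k), (s, false) =>
      (p * (FreeGroup.of s)⁻¹, k * (e ρ (p * (FreeGroup.of s)⁻¹) s)⁻¹)

def f2 (p : FreeGroup α) (l : List (α × Bool)) : FreeGroup (Bset ρ) :=
  (List.foldl (step ρ) (p, 1) l).2

theorem mk_cons (s : α) (b : Bool) (l : List (α × Bool)) :
    FreeGroup.mk ((s, b) :: l) = (cond b (FreeGroup.of s) (FreeGroup.of s)⁻¹) * FreeGroup.mk l := by
  cases b <;>
    simp only [cond] <;>
    rw [show FreeGroup.of s = FreeGroup.mk [(s, true)] from rfl]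
  · rw [FreeGroup.inv_mk, FreeGroup.mul_mk]; rfl
  · rw [FreeGroup.mul_mk]; rfl

theorem foldl_fst (p : FreeGroup α) (k : FreeGroup (Bset ρ)) (l : List (α × Bool)) :
    (List.foldl (step ρ) (p, k) l).1 = p * FreeGroup.mk l := by
  induction l generalizing p k with
  | nil => simp [show FreeGroup.mk ([] : List (α × Bool)) = 1 from rfl]
  | cons x l ih =>
      obtain ⟨s, b⟩ := x
      cases b <;> simp only [List.foldl_cons, step, ih, mk_cons, cond] <;> group

theorem foldl_snd (p : FreeGroup α) (k : FreeGroup (Bset ρ)) (l : List (α × Bool)) :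
    (List.foldl (step ρ) (p, k) l).2 = k * f2 ρ p l := by
  induction l generalizing p k with
  | nil => simp [f2]
  | cons x l ih =>
      obtain ⟨s, b⟩ := x
      cases b <;>
        simp only [f2, List.foldl_cons, step] <;>
        rw [ih, ih, ← mul_assoc, one_mul]

theorem f2_cons_true (p : FreeGroup α) (s : α) (l : List (α × Bool)) :
    f2 ρ p ((s, true) :: l) = e ρ p s * f2 ρ (p * FreeGroup.of s) l := by
  simp only [f2, List.foldl_cons, step]
  rw [foldl_snd, one_mul]
  rfl

theorem f2_cons_false (p : FreeGroup α) (s : α) (l : List (α × Bool)) :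
    f2 ρ p ((s, false) :: l) =
      (e ρ (p * (FreeGroup.of s)⁻¹) s)⁻¹ * f2 ρ (p * (FreeGroup.of s)⁻¹) l := by
  simp only [f2, List.foldl_cons, step]
  rw [foldl_snd, one_mul]
  rfl

theorem f2_append (p : FreeGroup α) (l₁ l₂ : List (α × Bool)) :
    f2 ρ p (l₁ ++ l₂) = f2 ρ p l₁ * f2 ρ (p * FreeGroup.mk l₁) l₂ := by
  simp only [f2, List.foldl_append]
  have h : List.foldl (step ρ) (p, 1) l₁ =
      (p * FreeGroup.mk l₁, (List.foldl (step ρ) (p, (1 : FreeGroup (Bset ρ))) l₁).2) := by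
    rw [← foldl_fst ρ p 1 l₁]
  rw [h, foldl_snd]
  rfl

theorem foldl_cancel (z : FreeGroup α × FreeGroup (Bset ρ)) (x : α) (b : Bool)
    (l : List (α × Bool)) :
    List.foldl (step ρ) z ((x, b) :: (x, !b) :: l) = List.foldl (step ρ) z l := by
  obtain ⟨p, k⟩ := z
  simp only [List.foldl_cons]
  congr 1
  cases b <;> simp only [Bool.not_true, Bool.not_false, step]
  · rw [inv_mul_cancel_right]
    exact Prod.ext rfl (by rw [inv_mul_cancel_right])
  · rw [mul_inv_cancel_right]
    exact Prod.ext rfl (by rw [mul_inv_cancel_right])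

theorem f2_red_step {l₁ l₂ : List (α × Bool)} (h : FreeGroup.Red.Step l₁ l₂)
    (p : FreeGroup α) : f2 ρ p l₁ = f2 ρ p l₂ := by
  cases h with
  | @not L₁ L₂ x b =>
      simp only [f2, List.foldl_append]
      rw [show ((x, b) :: (x, !b) :: L₂ : List (α × Bool)) = (x,b) :: (x,!b) :: L₂ from rfl]
      rw [foldl_cancel]

theorem f2_red {l₁ l₂ : List (α × Bool)} (h : FreeGroup.Red l₁ l₂)
    (p : FreeGroup α) : f2 ρ p l₁ = f2 ρ p l₂ := by
  induction h with
  | refl => rfl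
  | tail _ hstep ih => rw [ih, f2_red_step ρ hstep]

def f (w : FreeGroup α) : FreeGroup (Bset ρ) := f2 ρ 1 w.toWord

theorem f_mk (l : List (α × Bool)) : f ρ (FreeGroup.mk l) = f2 ρ 1 l := by
  rw [f, FreeGroup.toWord_mk]
  exact (f2_red ρ (FreeGroup.reduce.red) 1).symm


section WithH

variable {H : Subgroup (FreeGroup α)}
variable (h1 : ∀ g, ρ g * g⁻¹ ∈ H)
variable (h2 : ∀ g₁ g₂, g₁ * g₂⁻¹ ∈ H → ρ g₁ = ρ g₂)

include h1 h2

theorem rho_idem (g : FreeGroup α) : ρ (ρ g) = ρ g :=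
  h2 _ _ (h1 g)

theorem mem_of_rho_eq {p₁ p₂ : FreeGroup α} (h : ρ p₁ = ρ p₂) : p₁ * p₂⁻¹ ∈ H := by
  have key : p₁ * p₂⁻¹ = (ρ p₁ * p₁⁻¹)⁻¹ * (ρ p₂ * p₂⁻¹) := by rw [h]; group
  rw [key]
  exact mul_mem (inv_mem (h1 p₁)) (h1 p₂)

theorem rho_mul_congr {p₁ p₂ : FreeGroup α} (h : p₁ * p₂⁻¹ ∈ H) (x : FreeGroup α) :
    ρ (p₁ * x) = ρ (p₂ * x) := by
  refine h2 _ _ ?_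
  have key : p₁ * x * (p₂ * x)⁻¹ = p₁ * p₂⁻¹ := by group
  rw [key]; exact h

theorem rho_rho_mul (p x : FreeGroup α) : ρ (ρ p * x) = ρ (p * x) :=
  rho_mul_congr ρ h1 h2 (mem_of_rho_eq ρ h1 h2 (rho_idem ρ h1 h2 p)) x

omit h1 h2

theorem e_congr {p₁ p₂ : FreeGroup α} (h : ρ p₁ = ρ p₂) (s : α) : e ρ p₁ s = e ρ p₂ s := by
  by_cases hc : ρ p₂ * FreeGroup.of s * (ρ (ρ p₂ * FreeGroup.of s))⁻¹ = 1
  · rw [e, e, dif_pos (by rw [h]; exact hc), dif_pos hc]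
  · rw [e, e, dif_neg (by rw [h]; exact hc), dif_neg hc]
    congr 1
    exact Subtype.ext (by simp only [h])

include h1 h2

theorem f2_congr {p₁ p₂ : FreeGroup α} (h : p₁ * p₂⁻¹ ∈ H) (l : List (α × Bool)) :
    f2 ρ p₁ l = f2 ρ p₂ l := by
  induction l generalizing p₁ p₂ with
  | nil => rfl
  | cons x l ih =>
      obtain ⟨s, b⟩ := x
      have hr : ρ p₁ = ρ p₂ := h2 _ _ h
      cases b
      · have h' : p₁ * (FreeGroup.of s)⁻¹ * (p₂ * (FreeGroup.of s)⁻¹)⁻¹ ∈ H := by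
          have : p₁ * (FreeGroup.of s)⁻¹ * (p₂ * (FreeGroup.of s)⁻¹)⁻¹ = p₁ * p₂⁻¹ := by group
          rw [this]; exact h
        rw [f2_cons_false, f2_cons_false, ih h', e_congr ρ (h2 _ _ h')]
      · have h' : p₁ * FreeGroup.of s * (p₂ * FreeGroup.of s)⁻¹ ∈ H := by
          have : p₁ * FreeGroup.of s * (p₂ * FreeGroup.of s)⁻¹ = p₁ * p₂⁻¹ := by group
          rw [this]; exact h
        rw [f2_cons_true, f2_cons_true, ih h', e_congr ρ hr]

theorem f_mul {u : FreeGroup α} (hu : u ∈ H) (v : FreeGroup α) :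
    f ρ (u * v) = f ρ u * f ρ v := by
  have huv : u * v = FreeGroup.mk (u.toWord ++ v.toWord) := by
    rw [← FreeGroup.mul_mk, FreeGroup.mk_toWord, FreeGroup.mk_toWord]
  rw [huv, f_mk, f2_append, FreeGroup.mk_toWord, one_mul]
  rw [f2_congr ρ h1 h2 (by simpa using hu : u * (1 : FreeGroup α)⁻¹ ∈ H) v.toWord]
  rfl

theorem lift_e (p : FreeGroup α) (s : α) :
    FreeGroup.lift (fun b : Bset ρ => (b : FreeGroup α)) (e ρ p s) =
      ρ p * FreeGroup.of s * (ρ (ρ p * FreeGroup.of s))⁻¹ := by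
  rw [e]
  split
  · rename_i h; rw [h, _root_.map_one]
  · rw [FreeGroup.lift_apply_of]

theorem lift_f2 (p : FreeGroup α) (l : List (α × Bool)) :
    FreeGroup.lift (fun b : Bset ρ => (b : FreeGroup α)) (f2 ρ p l) =
      ρ p * FreeGroup.mk l * (ρ (p * FreeGroup.mk l))⁻¹ := by
  induction l generalizing p with
  | nil =>
      have : FreeGroup.mk ([] : List (α × Bool)) = 1 := rfl
      simp [f2, this]
  | cons x l ih =>
      obtain ⟨s, b⟩ := x
      cases b
      · rw [f2_cons_false, _root_.map_mul, _root_.map_inv, lift_e ρ h1 h2, ih, mk_cons]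
        rw [rho_rho_mul ρ h1 h2, show p * (FreeGroup.of s)⁻¹ * FreeGroup.of s = p by group]
        simp only [cond]
        group
      · rw [f2_cons_true, _root_.map_mul, lift_e ρ h1 h2, ih, mk_cons]
        rw [rho_rho_mul ρ h1 h2]
        simp only [cond]
        group

variable (hS : ∀ (g : FreeGroup α) (l₁ l₂ : List (α × Bool)),
    (ρ g).toWord = l₁ ++ l₂ → ∃ g', ρ g' = FreeGroup.mk l₁)

include hS

theorem rho_fix_prefix {g : FreeGroup α} {l₁ l₂ : List (α × Bool)}
    (h : (ρ g).toWord = l₁ ++ l₂) : ρ (FreeGroup.mk l₁) = FreeGroup.mk l₁ := by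
  obtain ⟨g', hg'⟩ := hS g l₁ l₂ h
  rw [← hg', rho_idem ρ h1 h2]

theorem rho_one : ρ (1 : FreeGroup α) = 1 := by
  have h := rho_fix_prefix ρ h1 h2 hS
    (show (ρ (1 : FreeGroup α)).toWord = [] ++ (ρ (1 : FreeGroup α)).toWord from rfl)
  rw [show FreeGroup.mk ([] : List (α × Bool)) = 1 from rfl] at h
  exact h

theorem f2_rep (g : FreeGroup α) :
    ∀ (l₂ l₁ : List (α × Bool)), (ρ g).toWord = l₁ ++ l₂ →
      f2 ρ (FreeGroup.mk l₁) l₂ = 1 := by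
  intro l₂
  induction l₂ with
  | nil => intro l₁ _; rfl
  | cons x l₂ ih =>
      intro l₁ hsplit
      obtain ⟨s, b⟩ := x
      have hsplit' : (ρ g).toWord = (l₁ ++ [(s, b)]) ++ l₂ := by
        rw [hsplit]; simp
      have hl1 : ρ (FreeGroup.mk l₁) = FreeGroup.mk l₁ :=
        rho_fix_prefix ρ h1 h2 hS hsplit
      have hl1' : ρ (FreeGroup.mk (l₁ ++ [(s, b)])) = FreeGroup.mk (l₁ ++ [(s, b)]) :=
        rho_fix_prefix ρ h1 h2 hS hsplit'
      cases b
      · -- letter (s, false)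
        have hq : FreeGroup.mk l₁ * (FreeGroup.of s)⁻¹ = FreeGroup.mk (l₁ ++ [(s, false)]) := by
          rw [show (FreeGroup.of s)⁻¹ = FreeGroup.mk [(s, false)] by
            rw [show FreeGroup.of s = FreeGroup.mk [(s,true)] from rfl, FreeGroup.inv_mk]; rfl,
            FreeGroup.mul_mk]
        rw [f2_cons_false, hq]
        have hqs : FreeGroup.mk (l₁ ++ [(s, false)]) * FreeGroup.of s = FreeGroup.mk l₁ := by
          rw [← hq]; group
        have he : e ρ (FreeGroup.mk (l₁ ++ [(s, false)])) s = 1 := by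
          rw [e, dif_pos]
          rw [hl1', hqs, hl1]
          group
        rw [he, ih _ hsplit', inv_one, one_mul]
      · -- letter (s, true)
        have hq : FreeGroup.mk l₁ * FreeGroup.of s = FreeGroup.mk (l₁ ++ [(s, true)]) := by
          rw [show FreeGroup.of s = FreeGroup.mk [(s,true)] from rfl, FreeGroup.mul_mk]
        rw [f2_cons_true]
        have he : e ρ (FreeGroup.mk l₁) s = 1 := by
          rw [e, dif_pos]
          rw [hl1, hq, hl1']
          group
        rw [he, hq, ih _ hsplit', one_mul]

theorem f2_rep_inv (g : FreeGroup α) :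
    ∀ (l₂ l₁ l₃ : List (α × Bool)) (p : FreeGroup α),
      (ρ g).toWord = l₁ ++ l₂ ++ l₃ →
      p * (FreeGroup.mk (l₁ ++ l₂))⁻¹ ∈ H →
      f2 ρ p (FreeGroup.invRev l₂) = 1 := by
  intro l₂
  induction l₂ using List.reverseRecOn with
  | nil =>
      intro l₁ l₃ p _ _
      rw [show FreeGroup.invRev ([] : List (α × Bool)) = [] by simp [FreeGroup.invRev]]
      rfl
  | append_singleton l₂ x ih =>
      intro l₁ l₃ p hsplit hp
      obtain ⟨s, b⟩ := x
      have hinv : FreeGroup.invRev (l₂ ++ [(s, b)]) = (s, !b) :: FreeGroup.invRev l₂ := by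
        simp [FreeGroup.invRev]
      rw [hinv]
      have hsplit' : (ρ g).toWord = l₁ ++ l₂ ++ ((s, b) :: l₃) := by
        rw [hsplit]; simp
      have hq : ρ (FreeGroup.mk (l₁ ++ l₂)) = FreeGroup.mk (l₁ ++ l₂) :=
        rho_fix_prefix ρ h1 h2 hS hsplit'
      have hr : ρ (FreeGroup.mk (l₁ ++ l₂ ++ [(s, b)])) = FreeGroup.mk (l₁ ++ l₂ ++ [(s, b)]) :=
        rho_fix_prefix ρ h1 h2 hS
          (l₁ := l₁ ++ l₂ ++ [(s, b)]) (l₂ := l₃) (by rw [hsplit]; simp)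
      have hp' : p * (FreeGroup.mk (l₁ ++ l₂ ++ [(s, b)]))⁻¹ ∈ H := by
        rw [show l₁ ++ l₂ ++ [(s, b)] = l₁ ++ (l₂ ++ [(s, b)]) by simp]
        exact hp
      cases b
      · -- last letter (s, false); inverse letter (s, true)
        have hkey : FreeGroup.mk (l₁ ++ l₂ ++ [(s, false)]) * FreeGroup.of s
            = FreeGroup.mk (l₁ ++ l₂) := by
          rw [show FreeGroup.of s = FreeGroup.mk [(s,true)] from rfl, FreeGroup.mul_mk]
          have : FreeGroup.Red ((l₁ ++ l₂ ++ [(s, false)]) ++ [(s, true)]) (l₁ ++ l₂) := by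
            have := @FreeGroup.Red.Step.not α (l₁ ++ l₂) [] s false
            simpa using (show FreeGroup.Red _ _ from Relation.ReflTransGen.single this)
          exact (FreeGroup.Red.exact.2 ⟨_, this, Relation.ReflTransGen.refl⟩)
        simp only [Bool.not_false]
        rw [f2_cons_true]
        have hrho : ρ p = FreeGroup.mk (l₁ ++ l₂ ++ [(s, false)]) := by
          rw [h2 _ _ hp', hr]
        have he : e ρ p s = 1 := by
          rw [e, dif_pos]
          rw [hrho, hkey, hq]
          group
        have hpnext : p * FreeGroup.of s * (FreeGroup.mk (l₁ ++ l₂))⁻¹ ∈ H := by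
          have : p * FreeGroup.of s * (FreeGroup.mk (l₁ ++ l₂))⁻¹ =
              p * (FreeGroup.mk (l₁ ++ l₂) * (FreeGroup.of s)⁻¹)⁻¹ := by group
          rw [this, show FreeGroup.mk (l₁ ++ l₂) * (FreeGroup.of s)⁻¹
              = FreeGroup.mk (l₁ ++ l₂ ++ [(s, false)]) by rw [← hkey]; group]
          exact hp'
        rw [he, one_mul]
        exact ih l₁ ((s, false) :: l₃) (p * FreeGroup.of s) hsplit' hpnext
      · -- last letter (s, true); inverse letter (s, false)
        have hkey : FreeGroup.mk (l₁ ++ l₂) * FreeGroup.of s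
            = FreeGroup.mk (l₁ ++ l₂ ++ [(s, true)]) := by
          rw [show FreeGroup.of s = FreeGroup.mk [(s,true)] from rfl, FreeGroup.mul_mk]
        simp only [Bool.not_true]
        rw [f2_cons_false]
        have hpnext : p * (FreeGroup.of s)⁻¹ * (FreeGroup.mk (l₁ ++ l₂))⁻¹ ∈ H := by
          have : p * (FreeGroup.of s)⁻¹ * (FreeGroup.mk (l₁ ++ l₂))⁻¹ =
              p * (FreeGroup.mk (l₁ ++ l₂) * FreeGroup.of s)⁻¹ := by group
          rw [this, hkey]
          exact hp'
        have hrho : ρ (p * (FreeGroup.of s)⁻¹) = FreeGroup.mk (l₁ ++ l₂) := by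
          rw [h2 _ _ hpnext, hq]
        have he : e ρ (p * (FreeGroup.of s)⁻¹) s = 1 := by
          rw [e, dif_pos]
          rw [hrho, hkey, hr]
          group
        rw [he, inv_one, one_mul]
        exact ih l₁ ((s, true) :: l₃) (p * (FreeGroup.of s)⁻¹) hsplit' hpnext

omit hS in
theorem gen_mem (g : FreeGroup α) (s : α) :
    ρ g * FreeGroup.of s * (ρ (ρ g * FreeGroup.of s))⁻¹ ∈ H := by
  have h := inv_mem (h1 (ρ g * FreeGroup.of s))
  have he : (ρ (ρ g * FreeGroup.of s) * (ρ g * FreeGroup.of s)⁻¹)⁻¹ =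
      ρ g * FreeGroup.of s * (ρ (ρ g * FreeGroup.of s))⁻¹ := by group
  rwa [he] at h

theorem f_gen' (g : FreeGroup α) (s : α) :
    f ρ (ρ g * FreeGroup.of s * (ρ (ρ g * FreeGroup.of s))⁻¹) = e ρ g s := by
  have ht : ρ g = ρ g := rfl
  have hu : ρ (ρ g * FreeGroup.of s) = ρ (ρ g * FreeGroup.of s) := rfl
  set t := ρ g with ht'
  set u := ρ (t * FreeGroup.of s) with hu'
  have hdecomp : t * FreeGroup.of s * u⁻¹ =
      FreeGroup.mk (t.toWord ++ ([(s, true)] ++ FreeGroup.invRev u.toWord)) := by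
    rw [← FreeGroup.mul_mk, ← FreeGroup.mul_mk]
    rw [FreeGroup.mk_toWord, show FreeGroup.mk [(s, true)] = FreeGroup.of s from rfl]
    rw [show FreeGroup.mk (FreeGroup.invRev u.toWord) = u⁻¹ by
      rw [← FreeGroup.inv_mk, FreeGroup.mk_toWord]]
    group
  rw [hdecomp, f_mk, f2_append, one_mul, FreeGroup.mk_toWord]
  have hrep1 : f2 ρ 1 t.toWord = 1 := by
    have := f2_rep ρ h1 h2 hS g t.toWord []
      (show (ρ g).toWord = [] ++ t.toWord by rw [← ht]; rfl)
    rwa [show FreeGroup.mk ([] : List (α × Bool)) = 1 from rfl] at this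
  rw [hrep1, one_mul]
  rw [show ([(s, true)] ++ FreeGroup.invRev u.toWord)
      = (s, true) :: FreeGroup.invRev u.toWord from rfl]
  rw [f2_cons_true]
  have hrep2 : f2 ρ (t * FreeGroup.of s) (FreeGroup.invRev u.toWord) = 1 := by
    refine f2_rep_inv ρ h1 h2 hS (t * FreeGroup.of s) u.toWord [] [] (t * FreeGroup.of s)
      ?_ ?_
    · rw [← hu]; simp; exact hu'.symm
    · rw [show FreeGroup.mk ([] ++ u.toWord) = u by rw [List.nil_append, FreeGroup.mk_toWord]]
      exact gen_mem ρ h1 h2 g s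
  rw [hrep2, mul_one]
  exact e_congr ρ (rho_idem ρ h1 h2 g) s

theorem f_gen (g : FreeGroup α) (s : α)
    (hx : ρ g * FreeGroup.of s * (ρ (ρ g * FreeGroup.of s))⁻¹ ≠ 1) :
    f ρ (ρ g * FreeGroup.of s * (ρ (ρ g * FreeGroup.of s))⁻¹) =
      FreeGroup.of (⟨_, ⟨⟨g, s, rfl⟩, hx⟩⟩ : Bset ρ) := by
  rw [f_gen' ρ h1 h2 hS, e, dif_neg hx]

def phi : H →* FreeGroup (Bset ρ) where
  toFun x := f ρ (x : FreeGroup α)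
  map_one' := by
    show f ρ 1 = 1
    rw [f, FreeGroup.toWord_one]
    rfl
  map_mul' a b := f_mul ρ h1 h2 a.2 (b : FreeGroup α)

omit hS

def psi : FreeGroup (Bset ρ) →* H :=
  FreeGroup.lift (fun b => ⟨(b : FreeGroup α), by
    obtain ⟨⟨g, s, hgs⟩, _⟩ := b.2
    rw [hgs]
    exact gen_mem ρ h1 h2 g s⟩)

theorem psi_val (x : FreeGroup (Bset ρ)) :
    ((psi ρ h1 h2 x : H) : FreeGroup α) =
      FreeGroup.lift (fun b : Bset ρ => (b : FreeGroup α)) x := by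
  have key : H.subtype.comp (psi ρ h1 h2) =
      FreeGroup.lift (fun b : Bset ρ => (b : FreeGroup α)) :=
    FreeGroup.ext_hom _ _ (fun b => by
      simp only [MonoidHom.comp_apply, psi, FreeGroup.lift_apply_of, Subgroup.coe_subtype])
  exact DFunLike.congr_fun key x

include hS

theorem left_inv : (psi ρ h1 h2).comp (phi ρ h1 h2) = MonoidHom.id H := by
  apply MonoidHom.ext
  intro x
  apply Subtype.ext
  rw [MonoidHom.comp_apply, psi_val, MonoidHom.id_apply]
  show FreeGroup.lift _ (f ρ (x : FreeGroup α)) = (x : FreeGroup α)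
  rw [f, lift_f2 ρ h1 h2, FreeGroup.mk_toWord, one_mul]
  rw [rho_one ρ h1 h2 hS]
  rw [show ρ (x : FreeGroup α) = ρ 1 from h2 _ _ (by simpa using x.2)]
  rw [rho_one ρ h1 h2 hS]
  group

theorem right_inv : (phi ρ h1 h2).comp (psi ρ h1 h2) = MonoidHom.id (FreeGroup (Bset ρ)) := by
  refine FreeGroup.ext_hom _ _ (fun b => ?_)
  rw [MonoidHom.comp_apply, MonoidHom.id_apply, psi, FreeGroup.lift_apply_of]
  show f ρ (b : FreeGroup α) = FreeGroup.of b
  obtain ⟨⟨g, s, hgs⟩, hne⟩ := b.2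
  have hne' : ρ g * FreeGroup.of s * (ρ (ρ g * FreeGroup.of s))⁻¹ ≠ 1 := hgs ▸ hne
  have : f ρ ((b : FreeGroup α)) = f ρ (ρ g * FreeGroup.of s * (ρ (ρ g * FreeGroup.of s))⁻¹) := by
    rw [← hgs]
  rw [this, f_gen ρ h1 h2 hS g s hne']
  congr 1
  exact Subtype.ext hgs.symm

end WithH

end RS8




/- Reidemeister–Schreier.  We use right cosets: `g₁` and `g₂` lie in the same coset of `H`
iff `g₁ * g₂⁻¹ ∈ H`; `ρ` assigns to each element the chosen representative of its coset.
Part one: for a group `G` generated by `S` and any transversal `ρ`, the elements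
`ρ(g) * s * (ρ(ρ(g) * s))⁻¹` generate `H`.  Part two: for a free group and a Schreier
transversal (closed under initial subwords of reduced words), the nontrivial such elements
freely generate `H`. -/
theorem stmt8 :
    (∀ (G : Type) (_ : Group G) (H : Subgroup G) (S : Set G),
        Subgroup.closure S = ⊤ →
        ∀ ρ : G → G, (∀ g : G, ρ g * g⁻¹ ∈ H) →
          (∀ g₁ g₂ : G, g₁ * g₂⁻¹ ∈ H → ρ g₁ = ρ g₂) →
          Subgroup.closure {x : G | ∃ g : G, ∃ s ∈ S, x = ρ g * s * (ρ (ρ g * s))⁻¹} = H) ∧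
    (∀ (α : Type) (_ : DecidableEq α) (H : Subgroup (FreeGroup α))
        (ρ : FreeGroup α → FreeGroup α),
        (∀ g, ρ g * g⁻¹ ∈ H) →
        (∀ g₁ g₂, g₁ * g₂⁻¹ ∈ H → ρ g₁ = ρ g₂) →
        (∀ (g : FreeGroup α) (l₁ l₂ : List (α × Bool)),
          (ρ g).toWord = l₁ ++ l₂ → ∃ g', ρ g' = FreeGroup.mk l₁) →
        ∃ φ : H ≃* FreeGroup {x : FreeGroup α |
            (∃ (g : FreeGroup α) (s : α),
              x = ρ g * FreeGroup.of s * (ρ (ρ g * FreeGroup.of s))⁻¹) ∧ x ≠ 1},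
          ∀ (x : FreeGroup α)
            (hx : (∃ (g : FreeGroup α) (s : α),
              x = ρ g * FreeGroup.of s * (ρ (ρ g * FreeGroup.of s))⁻¹) ∧ x ≠ 1)
            (hxH : x ∈ H),
            φ ⟨x, hxH⟩ = FreeGroup.of (⟨x, hx⟩ : {x : FreeGroup α |
              (∃ (g : FreeGroup α) (s : α),
                x = ρ g * FreeGroup.of s * (ρ (ρ g * FreeGroup.of s))⁻¹) ∧ x ≠ 1})) := by
  constructor
  · -- Part 1
    intro G _ H S hScl ρ h1 h2
    have ridem : ∀ g : G, ρ (ρ g) = ρ g := fun g => h2 _ _ (h1 g)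
    apply le_antisymm
    · rw [Subgroup.closure_le]
      rintro x ⟨g, s, _, rfl⟩
      have h := inv_mem (h1 (ρ g * s))
      have he : (ρ (ρ g * s) * (ρ g * s)⁻¹)⁻¹ = ρ g * s * (ρ (ρ g * s))⁻¹ := by group
      rw [he] at h
      exact h
    · intro h hh
      have key : ∀ w g : G, ρ g * w * (ρ (ρ g * w))⁻¹ ∈
          Subgroup.closure {x : G | ∃ g : G, ∃ s ∈ S, x = ρ g * s * (ρ (ρ g * s))⁻¹} := by
        intro w
        have hw : w ∈ Subgroup.closure S := by rw [hScl]; trivial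
        induction hw using Subgroup.closure_induction with
        | mem x hx => exact fun g => Subgroup.subset_closure ⟨g, x, hx, rfl⟩
        | one =>
            intro g
            rw [mul_one, ridem, mul_inv_cancel]
            exact one_mem _
        | mul x y hx hy ihx ihy =>
            intro g
            have e1 := ihx g
            have e2 := ihy (ρ g * x)
            have hrw : ρ (ρ (ρ g * x) * y) = ρ (ρ g * x * y) := h2 _ _ (by
              have hq : ρ (ρ g * x) * y * (ρ g * x * y)⁻¹ = ρ (ρ g * x) * (ρ g * x)⁻¹ := by
                group
              rw [hq]; exact h1 _)
            have hm := mul_mem e1 e2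
            rw [hrw] at hm
            have hid : ρ g * x * (ρ (ρ g * x))⁻¹ * (ρ (ρ g * x) * y * (ρ (ρ g * x * y))⁻¹)
                = ρ g * x * y * (ρ (ρ g * x * y))⁻¹ := by group
            rw [hid] at hm
            simpa only [mul_assoc] using hm
        | inv x hx ihx =>
            intro g
            have e1 := ihx (ρ g * x⁻¹)
            have hrw : ρ (ρ (ρ g * x⁻¹) * x) = ρ g := by
              have h' : ρ (ρ (ρ g * x⁻¹) * x) = ρ (ρ g * x⁻¹ * x) := h2 _ _ (by
                have hq : ρ (ρ g * x⁻¹) * x * (ρ g * x⁻¹ * x)⁻¹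
                    = ρ (ρ g * x⁻¹) * (ρ g * x⁻¹)⁻¹ := by group
                rw [hq]; exact h1 _)
              rw [h', show ρ g * x⁻¹ * x = ρ g by group, ridem]
            rw [hrw] at e1
            have hm := inv_mem e1
            have hid : (ρ (ρ g * x⁻¹) * x * (ρ g)⁻¹)⁻¹
                = ρ g * x⁻¹ * (ρ (ρ g * x⁻¹))⁻¹ := by group
            rw [hid] at hm
            exact hm
      have hmem1 : ρ 1 ∈ H := by simpa using h1 1
      have k1 := key (ρ 1)⁻¹ 1
      rw [show ρ 1 * (ρ 1)⁻¹ = 1 by group] at k1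
      rw [show (1 : G) * (ρ (1 : G))⁻¹ = (ρ (1 : G))⁻¹ by group] at k1
      -- now k1 : (ρ 1)⁻¹ ∈ closure
      have k2 := key h 1
      have hr2 : ρ (ρ 1 * h) = ρ 1 := h2 _ _ (by simpa using mul_mem hmem1 hh)
      rw [hr2] at k2
      have hm := mul_mem (mul_mem k1 k2) (inv_mem k1)
      have hid2 : (ρ (1:G))⁻¹ * (ρ 1 * h * (ρ 1)⁻¹) * ((ρ (1:G))⁻¹)⁻¹ = h := by group
      rw [hid2] at hm
      exact hm
  · -- Part 2
    intro α _ H ρ h1 h2 hS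
    refine ⟨MonoidHom.toMulEquiv (RS8.phi ρ h1 h2) (RS8.psi ρ h1 h2)
      (RS8.left_inv ρ h1 h2 hS) (RS8.right_inv ρ h1 h2 hS), ?_⟩
    intro x hx hxH
    obtain ⟨g, s, hgs⟩ := hx.1
    have hne' : ρ g * FreeGroup.of s * (ρ (ρ g * FreeGroup.of s))⁻¹ ≠ 1 := hgs ▸ hx.2
    show RS8.f ρ x = _
    have hstep : RS8.f ρ x =
        FreeGroup.of (⟨_, ⟨⟨g, s, rfl⟩, hne'⟩⟩ : RS8.Bset ρ) := by
      rw [show x = ρ g * FreeGroup.of s * (ρ (ρ g * FreeGroup.of s))⁻¹ from hgs]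
      exact RS8.f_gen ρ h1 h2 hS g s hne'
    rw [hstep]
    congr 1
    exact Subtype.ext hgs.symm
end

section
/- Let (B, A) and (B', A') be NDR pairs of topological spaces. Then (B × B', B × A' ∪ A × B') is an NDR pair. -/
open Set

/-- Auxiliary continuity lemma: the "slowed" deformation used in Steenrod's product
construction is continuous, even though the time-rescaling function is discontinuous
where `f` vanishes (there the homotopy is stationary, and the tube lemma applies). -/
private lemma ndr_aux_cont {B C : Type*} [TopologicalSpace B] [TopologicalSpace C]
    {A : Set B} (f : C(B, unitInterval)) (H : C(B × unitInterval, B))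
    (hf : ⇑f ⁻¹' {0} = A) (hH : ∀ a ∈ A, ∀ t : unitInterval, H (a, t) = a)
    (g : C → ℝ) (hg : Continuous g) :
    Continuous (fun p : (B × C) × unitInterval =>
      H (p.1.1, Set.projIcc (0:ℝ) 1 zero_le_one
        ((p.2 : ℝ) * min 1 (g p.1.2 / (f p.1.1 : ℝ))))) := by
  rw [continuous_iff_continuousAt]
  intro x
  by_cases h0 : (f x.1.1 : ℝ) = 0
  · have hmem : x.1.1 ∈ A := by
      rw [← hf]; exact Subtype.ext h0
    have hval : (fun p : (B × C) × unitInterval =>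
        H (p.1.1, Set.projIcc (0:ℝ) 1 zero_le_one
          ((p.2 : ℝ) * min 1 (g p.1.2 / (f p.1.1 : ℝ))))) x = x.1.1 := hH _ hmem _
    rw [ContinuousAt, hH _ hmem, Filter.tendsto_def]
    intro U hU
    obtain ⟨U', hU'sub, hU'open, hxU'⟩ := mem_nhds_iff.mp hU
    have hsubset : ({x.1.1} : Set B) ×ˢ (univ : Set unitInterval) ⊆ ⇑H ⁻¹' U' := by
      rintro ⟨b, t⟩ ⟨hb, -⟩
      simp only [mem_singleton_iff] at hb
      subst hb
      simpa [Set.mem_preimage, hH _ hmem t] using hxU'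
    obtain ⟨u, v, hu, hv, hxu, htv, huv⟩ := generalized_tube_lemma isCompact_singleton
      isCompact_univ (hU'open.preimage H.continuous) hsubset
    apply Filter.mem_of_superset
      (prod_mem_nhds (prod_mem_nhds (hu.mem_nhds (hxu rfl)) Filter.univ_mem) Filter.univ_mem)
    rintro ⟨⟨b, c⟩, t⟩ ⟨⟨hb, -⟩, -⟩
    have : (b, Set.projIcc (0:ℝ) 1 zero_le_one
        ((t : ℝ) * min 1 (g c / (f b : ℝ)))) ∈ u ×ˢ v :=
      ⟨hb, htv (mem_univ _)⟩
    exact hU'sub (huv this)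
  · have hc1 : ContinuousAt (fun p : (B × C) × unitInterval =>
        ((p.2 : ℝ) * min 1 (g p.1.2 / (f p.1.1 : ℝ)))) x := by
      apply ContinuousAt.mul
      · exact (continuous_subtype_val.comp continuous_snd).continuousAt
      · apply ContinuousAt.inf continuousAt_const
        exact ContinuousAt.div
          ((hg.comp (continuous_snd.comp continuous_fst)).continuousAt)
          ((continuous_subtype_val.comp
            (f.continuous.comp (continuous_fst.comp continuous_fst))).continuousAt) h0
    exact H.continuous.continuousAt.comp
      (((continuous_fst.comp continuous_fst).continuousAt).prodMk
        ((continuous_projIcc.continuousAt).comp hc1))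

/-- `(B, A)` is an NDR (neighborhood deformation retract) pair: `A ⊆ B` is closed and there
are maps `f : B → [0,1]` and `H : B × [0,1] → B` with `f⁻¹(0) = A`, `H` the identity on
`A × [0,1]` and at time `0`, and `H(b,1) ∈ A` whenever `f(b) < 1`. -/
def IsNDRPair {B : Type*} [TopologicalSpace B] (A : Set B) : Prop :=
  IsClosed A ∧
    ∃ (f : C(B, unitInterval)) (H : C(B × unitInterval, B)),
      (⇑f ⁻¹' {0} = A) ∧
      (∀ a ∈ A, ∀ t : unitInterval, H (a, t) = a) ∧
      (∀ b : B, H (b, 0) = b) ∧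
      (∀ b : B, (f b : ℝ) < 1 → H (b, 1) ∈ A)

theorem stmt14 {B B' : Type*} [TopologicalSpace B] [TopologicalSpace B']
    {A : Set B} {A' : Set B'} (h : IsNDRPair A) (h' : IsNDRPair A') :
    IsNDRPair ((Set.univ ×ˢ A') ∪ (A ×ˢ (Set.univ : Set B'))) := by
  obtain ⟨hA, f, H, hf, hH, hH0, hH1⟩ := h
  obtain ⟨hA', f', H', hf', hH', hH0', hH1'⟩ := h'
  have hmemA : ∀ b, b ∈ A ↔ (f b : ℝ) = 0 := fun b => by
    rw [← hf]
    simp only [Set.mem_preimage, Set.mem_singleton_iff, Subtype.ext_iff, Set.Icc.coe_zero]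
  have hmemA' : ∀ b', b' ∈ A' ↔ (f' b' : ℝ) = 0 := fun b' => by
    rw [← hf']
    simp only [Set.mem_preimage, Set.mem_singleton_iff, Subtype.ext_iff, Set.Icc.coe_zero]
  refine ⟨(isClosed_univ.prod hA').union (hA.prod isClosed_univ), ?_⟩
  -- time rescaling maps
  set σ₁ : (B × B') × unitInterval → unitInterval := fun p =>
    Set.projIcc (0:ℝ) 1 zero_le_one
      ((p.2 : ℝ) * min 1 ((f' p.1.2 : ℝ) / (f p.1.1 : ℝ))) with hσ₁
  set σ₂ : (B × B') × unitInterval → unitInterval := fun p =>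
    Set.projIcc (0:ℝ) 1 zero_le_one
      ((p.2 : ℝ) * min 1 ((f p.1.1 : ℝ) / (f' p.1.2 : ℝ))) with hσ₂
  have hproj0 : Set.projIcc (0:ℝ) 1 zero_le_one 0 = 0 := by
    rw [Set.projIcc_left]; rfl
  have hproj1 : Set.projIcc (0:ℝ) 1 zero_le_one 1 = 1 := by
    rw [Set.projIcc_right]; rfl
  refine ⟨⟨fun p => ⟨min (f p.1 : ℝ) (f' p.2 : ℝ),
      ⟨le_min (f p.1).2.1 (f' p.2).2.1, min_le_of_left_le (f p.1).2.2⟩⟩, ?_⟩,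
    ⟨fun p => (H (p.1.1, σ₁ p), H' (p.1.2, σ₂ p)), ?_⟩, ?_, ?_, ?_, ?_⟩
  · exact Continuous.subtype_mk
      (((continuous_subtype_val.comp (f.continuous.comp continuous_fst)).min
        (continuous_subtype_val.comp (f'.continuous.comp continuous_snd)))) _
  · refine Continuous.prodMk ?_ ?_
    · exact ndr_aux_cont f H hf hH (fun b' => (f' b' : ℝ))
        (continuous_subtype_val.comp f'.continuous)
    · have := ndr_aux_cont f' H' hf' hH' (fun b => (f b : ℝ))
        (continuous_subtype_val.comp f.continuous)
      exact this.comp (Continuous.prodMk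
        ((continuous_snd.comp continuous_fst).prodMk
          (continuous_fst.comp continuous_fst)) continuous_snd)
  · ext p
    simp only [ContinuousMap.coe_mk, Set.mem_preimage, Set.mem_singleton_iff,
      Subtype.ext_iff, Set.mem_union, Set.mem_prod, Set.mem_univ, true_and, and_true,
      hmemA, hmemA']
    show min (f p.1 : ℝ) (f' p.2 : ℝ) = 0 ↔ _
    constructor
    · intro hmin
      rcases min_eq_iff.mp hmin with ⟨ha, -⟩ | ⟨hb, -⟩
      · exact Or.inr ha
      · exact Or.inl hb
    · rintro (hb | ha)
      · rw [min_eq_right (hb ▸ (f p.1).2.1), hb]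
      · rw [min_eq_left (ha ▸ (f' p.2).2.1), ha]
  · rintro a (⟨-, ha2⟩ | ⟨ha1, -⟩) t
    · have h2 : (f' a.2 : ℝ) = 0 := (hmemA' a.2).mp ha2
      have e1 : σ₁ (a, t) = 0 := by
        rw [hσ₁]; simp only [h2, zero_div, min_eq_right zero_le_one, mul_zero, hproj0]
      have h1' : H (a.1, σ₁ (a, t)) = a.1 := by rw [e1]; exact hH0 a.1
      exact Prod.ext h1' (hH' a.2 ha2 _)
    · have h1 : (f a.1 : ℝ) = 0 := (hmemA a.1).mp ha1
      have e2 : σ₂ (a, t) = 0 := by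
        rw [hσ₂]; simp only [h1, zero_div, min_eq_right zero_le_one, mul_zero, hproj0]
      have : H' (a.2, σ₂ (a, t)) = a.2 := by rw [e2]; exact hH0' a.2
      exact Prod.ext (hH a.1 ha1 _) this
  · intro b
    have e1 : σ₁ (b, 0) = 0 := by
      rw [hσ₁]; simp only [Set.Icc.coe_zero, zero_mul, hproj0]
    have e2 : σ₂ (b, 0) = 0 := by
      rw [hσ₂]; simp only [Set.Icc.coe_zero, zero_mul, hproj0]
    refine Prod.ext ?_ ?_
    · show H (b.1, σ₁ (b, 0)) = b.1
      rw [e1]; exact hH0 b.1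
    · show H' (b.2, σ₂ (b, 0)) = b.2
      rw [e2]; exact hH0' b.2
  · intro b hlt
    have hlt' : min (f b.1 : ℝ) (f' b.2 : ℝ) < 1 := hlt
    rcases le_total (f b.1 : ℝ) (f' b.2 : ℝ) with hle | hle
    · have hlt1 : (f b.1 : ℝ) < 1 := by rwa [min_eq_left hle] at hlt'
      refine Or.inr ⟨?_, mem_univ _⟩
      show H (b.1, σ₁ (b, 1)) ∈ A
      by_cases hz : (f b.1 : ℝ) = 0
      · have hb1 : b.1 ∈ A := (hmemA b.1).mpr hz
        rw [hH b.1 hb1 _]; exact hb1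
      · have hpos : (0:ℝ) < f b.1 := lt_of_le_of_ne (f b.1).2.1 (Ne.symm hz)
        have e1 : σ₁ (b, 1) = 1 := by
          rw [hσ₁]
          simp only [Set.Icc.coe_one, one_mul,
            min_eq_left ((one_le_div hpos).mpr hle), hproj1]
        rw [e1]; exact hH1 b.1 hlt1
    · have hlt2 : (f' b.2 : ℝ) < 1 := by rwa [min_eq_right hle] at hlt'
      refine Or.inl ⟨mem_univ _, ?_⟩
      show H' (b.2, σ₂ (b, 1)) ∈ A'
      by_cases hz : (f' b.2 : ℝ) = 0
      · have hb2 : b.2 ∈ A' := (hmemA' b.2).mpr hz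
        rw [hH' b.2 hb2 _]; exact hb2
      · have hpos : (0:ℝ) < f' b.2 := lt_of_le_of_ne (f' b.2).2.1 (Ne.symm hz)
        have e2 : σ₂ (b, 1) = 1 := by
          rw [hσ₂]
          simp only [Set.Icc.coe_one, one_mul,
            min_eq_left ((one_le_div hpos).mpr hle), hproj1]
        rw [e2]; exact hH1' b.2 hlt2
end

section
/- Relatively T_1 inclusions are stable under pushouts: if A → B is a relatively T_1 inclusion and A → Y is any continuous map, then in the pushout square, the induced map Y → Z = B ⊔_A Y is a relatively T_1 inclusion. -/
open Topology

/-- The subset `A` of `X` is relatively `T₁`: every set `U ⊆ A` open in the subspace `A`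
can be separated from every point `b ∉ U` by an open set `U ⊆ V ⊆ X` with `b ∉ V`. -/
def IsRelT1 {X : Type*} [TopologicalSpace X] (A : Set X) : Prop :=
  ∀ U : Set X, U ⊆ A → IsOpen ((Subtype.val ⁻¹' U : Set A)) →
    ∀ b ∉ U, ∃ V : Set X, IsOpen V ∧ U ⊆ V ∧ b ∉ V

/-- The relation generating the pushout `B ⊔_A Y` of the inclusion `A ⊆ B` along `g`. -/
def pushRel {B Y : Type*} (A : Set B) (g : A → Y) : B ⊕ Y → B ⊕ Y → Prop :=
  fun u v => ∃ a : A, u = Sum.inl (a : B) ∧ v = Sum.inr (g a)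

section Aux

variable {B Y : Type*} [TopologicalSpace B] [TopologicalSpace Y] (A : Set B) (g : C(A, Y))

/-- The saturated set associated with a compatible pair of sets. -/
def pushSet (T : Set B) (W : Set Y) : Set (B ⊕ Y) :=
  {x | Sum.elim (· ∈ T) (· ∈ W) x}

lemma mem_pushSet_inl {T : Set B} {W : Set Y} {b : B} :
    Sum.inl b ∈ pushSet T W ↔ b ∈ T := Iff.rfl

lemma mem_pushSet_inr {T : Set B} {W : Set Y} {y : Y} :
    Sum.inr y ∈ pushSet T W ↔ y ∈ W := Iff.rfl

lemma pushSet_invariant {T : Set B} {W : Set Y}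
    (hc : ∀ a : A, (a : B) ∈ T ↔ g a ∈ W) :
    ∀ u v, Relation.EqvGen (pushRel A ⇑g) u v →
      (u ∈ pushSet T W ↔ v ∈ pushSet T W) := by
  intro u v h
  induction h with
  | rel u v huv =>
    obtain ⟨a, rfl, rfl⟩ := huv
    simpa [mem_pushSet_inl, mem_pushSet_inr] using hc a
  | refl u => rfl
  | symm u v _ ih => exact ih.symm
  | trans u v w _ _ ih₁ ih₂ => exact ih₁.trans ih₂

lemma pushSet_preimage {T : Set B} {W : Set Y}
    (hc : ∀ a : A, (a : B) ∈ T ↔ g a ∈ W) :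
    Quot.mk (pushRel A ⇑g) ⁻¹' (Quot.mk (pushRel A ⇑g) '' pushSet T W) = pushSet T W := by
  ext x
  constructor
  · rintro ⟨w, hw, hqw⟩
    exact (pushSet_invariant A g hc w x (Quot.eqvGen_exact hqw)).mp hw
  · intro hx
    exact ⟨x, hx, rfl⟩

lemma pushSet_open {T : Set B} {W : Set Y} (hT : IsOpen T) (hW : IsOpen W)
    (hc : ∀ a : A, (a : B) ∈ T ↔ g a ∈ W) :
    IsOpen (Quot.mk (pushRel A ⇑g) '' pushSet T W) := by
  rw [isOpen_coinduced, pushSet_preimage A g hc, isOpen_sum_iff]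
  exact ⟨hT, hW⟩

lemma mem_pushImage {T : Set B} {W : Set Y}
    (hc : ∀ a : A, (a : B) ∈ T ↔ g a ∈ W) (x : B ⊕ Y) :
    Quot.mk (pushRel A ⇑g) x ∈ Quot.mk (pushRel A ⇑g) '' pushSet T W ↔ x ∈ pushSet T W := by
  constructor
  · intro hx
    have := pushSet_preimage A g hc
    rw [← this]; exact hx
  · intro hx; exact ⟨x, hx, rfl⟩

open Classical in
/-- A classifying function used to prove injectivity. -/
noncomputable def classify : B ⊕ Y → Option Y := fun x =>
  Sum.elim (fun b => if h : b ∈ A then some (g ⟨b, h⟩) else none) (fun y => some y) x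

lemma classify_lift :
    ∀ u v, pushRel A ⇑g u v → classify A g u = classify A g v := by
  rintro u v ⟨a, rfl, rfl⟩
  simp [classify]

end Aux

theorem stmt16 {B Y : Type*} [TopologicalSpace B] [TopologicalSpace Y]
    (A : Set B) (hA : IsRelT1 A) (g : C(A, Y)) :
    IsEmbedding (fun y : Y => Quot.mk (pushRel A ⇑g) (Sum.inr y)) ∧
      ∀ U : Set Y, IsOpen U →
        ∀ z ∉ (fun y : Y => Quot.mk (pushRel A ⇑g) (Sum.inr y)) '' U,
          ∃ V : Set (Quot (pushRel A ⇑g)), IsOpen V ∧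
            (fun y : Y => Quot.mk (pushRel A ⇑g) (Sum.inr y)) '' U ⊆ V ∧ z ∉ V := by
  let q : B ⊕ Y → Quot (pushRel A ⇑g) := Quot.mk (pushRel A ⇑g)
  -- For each open `U ⊆ Y`, build a compatible pair `(T, U)` giving an open set in the pushout.
  have key : ∀ U : Set Y, IsOpen U → ∃ T : Set B, IsOpen T ∧
      (∀ a : A, (a : B) ∈ T ↔ g a ∈ U) := by
    intro U hU
    -- `g ⁻¹' U` is open in `A`, so it is the trace of an open set of `B`.
    have h1 : IsOpen ((⇑g) ⁻¹' U : Set A) := hU.preimage g.continuous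
    rw [isOpen_induced_iff] at h1
    obtain ⟨T, hT, hTU⟩ := h1
    refine ⟨T, hT, fun a => ?_⟩
    constructor
    · intro ha
      have : a ∈ (Subtype.val ⁻¹' T : Set A) := ha
      rw [hTU] at this; exact this
    · intro ha
      have : a ∈ ((⇑g) ⁻¹' U : Set A) := ha
      rw [← hTU] at this; exact this
  have hcont : Continuous (fun y : Y => q (Sum.inr y)) :=
    (continuous_quot_mk).comp continuous_inr
  have hinj : Function.Injective (fun y : Y => q (Sum.inr y)) := by
    intro y y' h
    have := congrArg (Quot.lift (classify A g) (classify_lift A g)) h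
    simpa [q, classify] using this
  constructor
  · refine ⟨?_, hinj⟩
    constructor
    refine le_antisymm hcont.le_induced ?_
    intro U hU
    obtain ⟨T, hT, hc⟩ := key U hU
    refine isOpen_induced_iff.mpr ⟨q '' pushSet T U, pushSet_open A g hT hU hc, ?_⟩
    ext y
    simpa [q, mem_pushSet_inr] using mem_pushImage A g hc (Sum.inr y)
  · intro U hU z hz
    obtain ⟨T, hT, hc⟩ := key U hU
    obtain ⟨x, rfl⟩ := Quot.exists_rep z
    cases x with
    | inr y =>
      -- `z = q (inr y)` with `y ∉ U`
      have hyU : y ∉ U := fun h => hz ⟨y, h, rfl⟩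
      refine ⟨q '' pushSet T U, pushSet_open A g hT hU hc, ?_, ?_⟩
      · rintro _ ⟨y', hy', rfl⟩
        exact ⟨Sum.inr y', hy', rfl⟩
      · intro hmem
        exact hyU ((mem_pushImage A g hc (Sum.inr y)).mp hmem)
    | inl b =>
      by_cases hb : b ∈ A
      · -- `q (inl b) = q (inr (g b))`, reduce to the previous case
        have heq : Quot.mk (pushRel A ⇑g) (Sum.inl b) = Quot.mk (pushRel A ⇑g) (Sum.inr (g ⟨b, hb⟩)) :=
          Quot.sound ⟨⟨b, hb⟩, rfl, rfl⟩
        have hyU : g ⟨b, hb⟩ ∉ U := fun h => hz ⟨g ⟨b, hb⟩, h, heq.symm⟩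
        refine ⟨q '' pushSet T U, pushSet_open A g hT hU hc, ?_, ?_⟩
        · rintro _ ⟨y', hy', rfl⟩
          exact ⟨Sum.inr y', hy', rfl⟩
        · intro hmem
          rw [heq] at hmem
          exact hyU ((mem_pushImage A g hc (Sum.inr (g ⟨b, hb⟩))).mp hmem)
      · -- `b ∉ A`: use relative `T₁`
        set U₀ : Set B := Subtype.val '' ((⇑g) ⁻¹' U : Set A) with hU₀
        have hU₀A : U₀ ⊆ A := by
          rintro _ ⟨a, _, rfl⟩; exact a.2
        have hU₀open : IsOpen ((Subtype.val ⁻¹' U₀ : Set A)) := by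
          have : (Subtype.val ⁻¹' U₀ : Set A) = (⇑g) ⁻¹' U := by
            ext a
            simp only [hU₀, Set.mem_preimage, Set.mem_image]
            constructor
            · rintro ⟨a', ha', h⟩
              have : a' = a := Subtype.ext h
              rwa [← this]
            · intro h; exact ⟨a, h, rfl⟩
          rw [this]
          exact hU.preimage g.continuous
        have hbU₀ : b ∉ U₀ := fun h => hb (hU₀A h)
        obtain ⟨V₀, hV₀open, hUV₀, hbV₀⟩ := hA U₀ hU₀A hU₀open b hbU₀
        have hc' : ∀ a : A, (a : B) ∈ V₀ ∩ T ↔ g a ∈ U := by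
          intro a
          constructor
          · intro ha; exact (hc a).mp ha.2
          · intro ha
            exact ⟨hUV₀ ⟨a, ha, rfl⟩, (hc a).mpr ha⟩
        refine ⟨q '' pushSet (V₀ ∩ T) U, pushSet_open A g (hV₀open.inter hT) hU hc', ?_, ?_⟩
        · rintro _ ⟨y', hy', rfl⟩
          exact ⟨Sum.inr y', hy', rfl⟩
        · intro hmem
          have := (mem_pushImage A g hc' (Sum.inl b)).mp hmem
          exact hbV₀ this.1
end
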